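/- arXiv:1901.01072 — 2 statements merged into one kernel-verified Lean document; each statement's English description precedes it below -/
import Mathlib

section
/- Let α be an integer with 11 ≤ α ≤ 50, let n = 2^r for some integer r with n > α, and let a_0,…,a_n be integers with |a_0·a_n| = 1. Then ψ_n^{(α)}(x; a_0,…,a_n) is irreducible over ℚ. -/
/-!
For `α ≥ 0` the coefficient of `x ^ (n - k)` in `ψ` is `a_{n-k} · n(n-1)⋯(n-k+1) · C(α+n, k)`.
When `n = 2 ^ r > α`, the falling factorial is divisible by `2 ^ k` for `k < n`, while the
constant term `a_0 · n! · C(α+n, n)` has 2-adic valuation exactly `n - 1` (Legendre's formula,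
and Lucas's theorem for the odd binomial), and `a_n = ±1`. So the 2-adic Newton polygon of `ψ`
is a single edge of slope `(n-1)/n` in lowest terms: reversing `ψ`, substituting `x ↦ x / 2`
and multiplying by `2` gives an Eisenstein polynomial at `2`.
-/

open Polynomial Finset

/-- ψ_n^{(α)}(x; a_0,…,a_n) = Σ_{j=0}^n a_j·C(n,j)·(α+n)(α+n−1)⋯(α+j+1)·x^j,
regarded as a polynomial over ℚ. -/
noncomputable def psiInt (n : ℕ) (α : ℤ) (a : ℕ → ℤ) : Polynomial ℚ :=
  ∑ j ∈ Finset.range (n + 1),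
    Polynomial.C (((a j * (n.choose j : ℤ) * ∏ i ∈ Finset.Icc (j + 1) n, (α + i) : ℤ)) : ℚ) *
      Polynomial.X ^ j

open scoped Nat

namespace Polynomial

theorem coeff_sum_range_C_mul_X_pow {R : Type*} [Semiring R] (d : ℕ → R) (n k : ℕ) :
    (∑ j ∈ range (n + 1), C (d j) * X ^ j).coeff k = if k ≤ n then d k else 0 := by
  simp

theorem irreducible_comp_C_mul_X_iff {R : Type*} [CommRing R] {c : R} (hc : IsUnit c)
    {q : R[X]} : Irreducible (q.comp (C c * X)) ↔ Irreducible q := by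
  let _ := hc.invertible
  simpa [comp_eq_aeval] using MulEquiv.irreducible_iff (algEquivCMulXAddC c 0) (x := q)

section Domain

variable {R : Type*} [CommRing R] [IsDomain R]

theorem isUnit_of_isUnit_reverse {w : R[X]} (hw : w.coeff 0 ≠ 0) (hu : IsUnit w.reverse) :
    IsUnit w := by
  have hdeg : w.natDegree = 0 := by
    simpa [reverse_natDegree, natTrailingDegree_eq_zero.mpr (Or.inr hw)] using
      natDegree_eq_zero_of_isUnit hu
  rw [eq_C_of_natDegree_eq_zero hdeg] at hu ⊢
  simpa using hu

theorem irreducible_of_irreducible_reverse {f : R[X]} (h0 : f.coeff 0 ≠ 0)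
    (h : Irreducible f.reverse) : Irreducible f where
  not_isUnit hu := h.not_isUnit <| by
    obtain ⟨c, -, rfl⟩ := Polynomial.isUnit_iff.mp hu
    simpa using hu
  isUnit_or_isUnit {u v} huv := by
    rw [huv, mul_coeff_zero] at h0
    rw [huv, reverse_mul_of_domain] at h
    exact (h.isUnit_or_isUnit rfl).imp (isUnit_of_isUnit_reverse (left_ne_zero_of_mul h0))
      (isUnit_of_isUnit_reverse (right_ne_zero_of_mul h0))

theorem isPrimitive_of_coeff_zero_eq_mul {p u : R} (hp : Prime p) (hu : IsUnit u) {g : R[X]}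
    {n : ℕ} (h0 : g.coeff 0 = p * u) (hn : ¬ p ∣ g.coeff n) : g.IsPrimitive := by
  intro r hr
  have hrp : r ∣ p := hu.dvd_mul_right.mp (h0 ▸ (C_dvd_iff_dvd_coeff r g).mp hr 0)
  refine (hp.irreducible.dvd_iff.mp hrp).resolve_right fun hpr => hn ?_
  exact hpr.dvd.trans ((C_dvd_iff_dvd_coeff r g).mp hr n)

theorem irreducible_of_eisenstein_of_coeff_zero_eq_mul {p u : R} (hp : Prime p) (hu : IsUnit u)
    {g : R[X]} (hdeg : 0 < g.natDegree) (h0 : g.coeff 0 = p * u)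
    (hmid : ∀ k < g.natDegree, p ∣ g.coeff k) (hlead : ¬ p ∣ g.leadingCoeff) :
    Irreducible g := by
  have hdegree : g.degree = g.natDegree := degree_eq_natDegree (ne_zero_of_natDegree_gt hdeg)
  refine irreducible_of_eisenstein_criterion ((Ideal.span_singleton_prime hp.ne_zero).mpr hp)
    ?_ ?_ ?_ ?_ (isPrimitive_of_coeff_zero_eq_mul hp hu h0 hlead)
  · rwa [Ideal.mem_span_singleton]
  · intro k hk
    rw [hdegree, Nat.cast_lt] at hk
    exact Ideal.mem_span_singleton.mpr (hmid k hk)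
  · rw [hdegree]
    exact_mod_cast hdeg
  · rw [Ideal.span_singleton_pow, Ideal.mem_span_singleton, h0, pow_two,
      mul_dvd_mul_iff_left hp.ne_zero]
    exact fun h => hp.not_isUnit (isUnit_of_dvd_unit h hu)

end Domain

theorem map_sum_C_ediv_pow_mul_X_pow_comp {p : ℤ} (hp : p ≠ 0) {f : ℤ[X]}
    (hdvd : ∀ k ≤ f.natDegree, p ^ k ∣ p * f.coeff k) :
    ((∑ k ∈ range (f.natDegree + 1), C (p * f.coeff k / p ^ k) * X ^ k).map
      (Int.castRingHom ℚ)).comp (C (p : ℚ) * X) = C (p : ℚ) * f.map (Int.castRingHom ℚ) := by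
  ext k
  rw [comp_C_mul_X_coeff, coeff_map, coeff_C_mul, coeff_map, coeff_sum_range_C_mul_X_pow]
  split_ifs with hk
  · obtain ⟨m, hm⟩ := hdvd k hk
    rw [hm, Int.mul_ediv_cancel_left _ (pow_ne_zero _ hp)]
    simpa [mul_comm] using congrArg (Int.cast : ℤ → ℚ) hm.symm
  · simp [coeff_eq_zero_of_natDegree_lt (not_le.mp hk)]

/-- A single-slope Newton polygon criterion: the substitution `X ↦ X / p` makes `p • f`
Eisenstein at `p`. -/
theorem irreducible_map_of_pow_dvd_coeff {p : ℤ} (hp : Prime p) {f : ℤ[X]}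
    (hdeg : 0 < f.natDegree) (h0 : IsUnit (f.coeff 0))
    (hmid : ∀ k < f.natDegree, p ^ k ∣ f.coeff k)
    (hlead : p ^ (f.natDegree - 1) ∣ f.leadingCoeff)
    (hlead' : ¬ p ^ f.natDegree ∣ f.leadingCoeff) :
    Irreducible (f.map (Int.castRingHom ℚ)) := by
  set n := f.natDegree
  have hdvd : ∀ k ≤ n, p ^ k ∣ p * f.coeff k := by
    intro k hk
    rcases hk.lt_or_eq with hkn | rfl
    · exact dvd_mul_of_dvd_right (hmid k hkn) p
    · calc p ^ n = p * p ^ (n - 1) := by rw [← pow_succ', Nat.sub_add_cancel hdeg]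
        _ ∣ p * f.coeff n := mul_dvd_mul_left p hlead
  set g : ℤ[X] := ∑ k ∈ range (n + 1), C (p * f.coeff k / p ^ k) * X ^ k
  have hg : ∀ k, g.coeff k = if k ≤ n then p * f.coeff k / p ^ k else 0 :=
    coeff_sum_range_C_mul_X_pow _ n
  have hg0 : g.coeff 0 = p * f.coeff 0 := by simp [hg]
  have hgn : ¬ p ∣ g.coeff n := by
    rwa [hg, if_pos le_rfl, Int.dvd_div_iff_mul_dvd (hdvd n le_rfl), mul_comm,
      mul_dvd_mul_iff_left hp.ne_zero]
  have hgdeg : g.natDegree = n :=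
    natDegree_eq_of_le_of_coeff_ne_zero
      (natDegree_le_iff_coeff_eq_zero.mpr fun k hk => by simp [hg, not_le.mpr hk])
      (fun h => hgn (h ▸ dvd_zero p))
  have hglead : ¬ p ∣ g.leadingCoeff := by rwa [leadingCoeff, hgdeg]
  have hgirr : Irreducible g := by
    refine irreducible_of_eisenstein_of_coeff_zero_eq_mul hp h0 (hgdeg ▸ hdeg) hg0
      (fun k hk => ?_) hglead
    rw [hgdeg] at hk
    rw [hg, if_pos hk.le, Int.dvd_div_iff_mul_dvd (hdvd k hk.le), mul_comm]
    exact mul_dvd_mul_left p (hmid k hk)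
  have hp0 : IsUnit (p : ℚ) := isUnit_iff_ne_zero.mpr (by exact_mod_cast hp.ne_zero)
  rw [← irreducible_isUnit_mul (isUnit_C.mpr hp0),
    ← map_sum_C_ediv_pow_mul_X_pow_comp hp.ne_zero hdvd, irreducible_comp_C_mul_X_iff hp0,
    ← IsPrimitive.Int.irreducible_iff_irreducible_map_cast
      (isPrimitive_of_coeff_zero_eq_mul hp h0 hg0 hglead)]
  exact hgirr

theorem irreducible_map_of_pow_dvd_coeff_sub {p : ℤ} (hp : Prime p) {f : ℤ[X]}
    (hdeg : 0 < f.natDegree) (hlead : IsUnit f.leadingCoeff)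
    (hmid : ∀ k < f.natDegree, p ^ k ∣ f.coeff (f.natDegree - k))
    (h0 : p ^ (f.natDegree - 1) ∣ f.coeff 0) (h0' : ¬ p ^ f.natDegree ∣ f.coeff 0) :
    Irreducible (f.map (Int.castRingHom ℚ)) := by
  have hc0 : f.coeff 0 ≠ 0 := fun h => h0' (h ▸ dvd_zero _)
  have hrdeg : f.reverse.natDegree = f.natDegree := by
    rw [reverse_natDegree, natTrailingDegree_eq_zero.mpr (Or.inr hc0), Nat.sub_zero]
  have hrlead : f.reverse.leadingCoeff = f.coeff 0 := by
    rw [leadingCoeff, hrdeg, coeff_reverse, revAt_le le_rfl, Nat.sub_self]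
  refine irreducible_of_irreducible_reverse (by simpa using hc0) ?_
  rw [reverse, natDegree_map_eq_of_injective (RingHom.injective_int _), reflect_map, ← reverse]
  refine irreducible_map_of_pow_dvd_coeff hp (hrdeg ▸ hdeg) (by rwa [coeff_zero_reverse])
    (fun k hk => ?_) (by rwa [hrdeg, hrlead]) (by rwa [hrdeg, hrlead])
  rw [hrdeg] at hk
  rw [coeff_reverse, revAt_le hk.le]
  exact hmid k hk

end Polynomial

theorem padicValNat_two_pow_factorial (r : ℕ) : padicValNat 2 (2 ^ r)! = 2 ^ r - 1 := by
  have hdigits : Nat.digits 2 (2 ^ r) = List.replicate r 0 ++ [1] := by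
    simpa using Nat.digits_base_pow_mul (b := 2) (k := r) (m := 1) (by norm_num) one_pos
  have h := sub_one_mul_padicValNat_factorial (p := 2) (2 ^ r)
  rw [hdigits] at h
  simpa using h

theorem Nat.two_pow_dvd_descFactorial_two_pow {r k : ℕ} (hk : k < 2 ^ r) :
    2 ^ k ∣ (2 ^ r).descFactorial k := by
  have hne : (2 ^ r).descFactorial k ≠ 0 := by
    rw [Ne, Nat.descFactorial_eq_zero_iff_lt]
    omega
  have hsplit := congrArg (padicValNat 2) (Nat.factorial_mul_descFactorial hk.le)
  rw [padicValNat.mul (Nat.factorial_ne_zero _) hne, padicValNat_two_pow_factorial] at hsplit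
  have := padicValNat_factorial_lt_of_ne_zero 2 (n := 2 ^ r - k) (by omega)
  rw [padicValNat_dvd_iff_le hne]
  omega

theorem Nat.odd_choose_add_two_pow {α r : ℕ} (h : α < 2 ^ r) :
    Odd ((α + 2 ^ r).choose (2 ^ r)) := by
  have hlucas := Choose.choose_modEq_choose_mul_prod_range_choose
    (n := α + 2 ^ r) (k := 2 ^ r) (p := 2) r
  have hhigh : (α + 2 ^ r) / 2 ^ r = 1 := by
    rw [Nat.add_div_right _ (by positivity), Nat.div_eq_of_lt h]
  have hlow : ∀ i ∈ range r, 2 ^ r / 2 ^ i % 2 = 0 := by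
    intro i hi
    rw [Nat.pow_div (mem_range.mp hi).le (by norm_num)]
    exact Nat.two_pow_mod_two_eq_zero.mpr (by simp at hi; omega)
  rw [hhigh, Nat.div_self (by positivity), prod_congr rfl fun i hi => by rw [hlow i hi]]
    at hlucas
  simp only [Nat.choose_self, Nat.choose_zero_right, prod_const_one, mul_one, Nat.cast_one]
    at hlucas
  exact Nat.odd_iff.mpr (by rw [Int.ModEq] at hlucas; omega)

theorem Nat.two_pow_dvd_factorial_mul_choose_iff {α r m : ℕ} (h : α < 2 ^ r) :
    2 ^ m ∣ (2 ^ r)! * (α + 2 ^ r).choose (2 ^ r) ↔ m < 2 ^ r := by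
  have hodd := Nat.odd_choose_add_two_pow h
  rw [padicValNat_dvd_iff_le (Nat.mul_ne_zero (Nat.factorial_ne_zero _) hodd.pos.ne'),
    padicValNat.mul (Nat.factorial_ne_zero _) hodd.pos.ne', padicValNat_two_pow_factorial,
    padicValNat.eq_zero_of_not_dvd hodd.not_two_dvd_nat, add_zero]
  have : 0 < 2 ^ r := by positivity
  omega

theorem Nat.choose_mul_prod_Icc_add {α n j : ℕ} (hj : j ≤ n) :
    n.choose j * ∏ i ∈ Icc (j + 1) n, (α + i)
      = n.descFactorial (n - j) * (α + n).choose (n - j) := by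
  have hprod : ∏ i ∈ Icc (j + 1) n, (α + i) = (α + j + 1).ascFactorial (n - j) := by
    rw [Nat.ascFactorial_eq_prod_range, ← Finset.Ico_add_one_right_eq_Icc,
      prod_Ico_eq_prod_range, Nat.add_sub_add_right]
    exact prod_congr rfl fun i _ => by ring
  rw [hprod, Nat.ascFactorial_eq_factorial_mul_choose, Nat.descFactorial_eq_factorial_mul_choose,
    Nat.choose_symm hj, show α + j + (n - j) = α + n by omega]
  ring

noncomputable def psiZ (n α : ℕ) (a : ℕ → ℤ) : ℤ[X] :=
  ∑ j ∈ range (n + 1), C (a j * (n.descFactorial (n - j) * (α + n).choose (n - j) : ℕ)) * X ^ j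

theorem map_psiZ (n α : ℕ) (a : ℕ → ℤ) :
    (psiZ n α a).map (Int.castRingHom ℚ) = psiInt n α a := by
  simp only [psiZ, psiInt, Polynomial.map_sum, Polynomial.map_mul, map_C, Polynomial.map_pow,
    map_X]
  refine sum_congr rfl fun j hj => ?_
  rw [eq_intCast, ← Nat.choose_mul_prod_Icc_add (Nat.lt_succ_iff.mp (mem_range.mp hj))]
  simp [mul_assoc]

theorem coeff_psiZ (n α : ℕ) (a : ℕ → ℤ) (k : ℕ) : (psiZ n α a).coeff k =
    if k ≤ n then a k * (n.descFactorial (n - k) * (α + n).choose (n - k) : ℕ) else 0 := by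
  rw [psiZ, coeff_sum_range_C_mul_X_pow]

theorem coeff_psiZ_sub {n α k : ℕ} (a : ℕ → ℤ) (hk : k ≤ n) :
    (psiZ n α a).coeff (n - k) = a (n - k) * (n.descFactorial k * (α + n).choose k : ℕ) := by
  rw [coeff_psiZ, if_pos (Nat.sub_le n k), Nat.sub_sub_self hk]

theorem natDegree_psiZ {n α : ℕ} {a : ℕ → ℤ} (ha : a n ≠ 0) : (psiZ n α a).natDegree = n :=
  natDegree_eq_of_le_of_coeff_ne_zero
    (natDegree_le_iff_coeff_eq_zero.mpr fun k hk => by simp [coeff_psiZ, not_le.mpr hk])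
    (by simpa [coeff_psiZ] using ha)

theorem stmt_13_general (α : ℤ) (hα1 : 11 ≤ α) (n : ℕ) (r : ℕ)
    (hnr : n = 2 ^ r) (hnα : α < (n : ℤ)) (a : ℕ → ℤ) (ha : |a 0 * a n| = 1) :
    Irreducible (psiInt n α a) := by
  lift α to ℕ using (by omega)
  subst hnr
  have hαn : α < 2 ^ r := by exact_mod_cast hnα
  obtain ⟨ha0, han⟩ := IsUnit.mul_iff.mp (Int.isUnit_iff_abs_eq.mpr ha)
  have hdvd_iff := fun m => Nat.two_pow_dvd_factorial_mul_choose_iff (m := m) hαn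
  rw [← map_psiZ]
  have hdeg := natDegree_psiZ (α := α) han.ne_zero
  have hcoeff0 := coeff_psiZ_sub (α := α) a (le_refl (2 ^ r))
  rw [Nat.sub_self, Nat.descFactorial_self] at hcoeff0
  refine irreducible_map_of_pow_dvd_coeff_sub Int.prime_two (by rw [hdeg]; positivity)
    (by simpa [leadingCoeff, hdeg, coeff_psiZ] using han) ?_ ?_ ?_ <;> rw [hdeg]
  · intro k hk
    rw [coeff_psiZ_sub a hk.le]
    exact Dvd.dvd.mul_left
      (mod_cast dvd_mul_of_dvd_left (Nat.two_pow_dvd_descFactorial_two_pow hk) _) _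
  · rw [hcoeff0]
    exact Dvd.dvd.mul_left (mod_cast (hdvd_iff _).mpr (Nat.sub_lt (by positivity) one_pos)) _
  · rw [hcoeff0, ha0.dvd_mul_left]
    exact_mod_cast (hdvd_iff _).not.mpr (lt_irrefl _)

theorem stmt_13 (α : ℤ) (hα1 : 11 ≤ α) (hα2 : α ≤ 50) (n : ℕ) (r : ℕ)
    (hnr : n = 2 ^ r) (hnα : α < (n : ℤ)) (a : ℕ → ℤ) (ha : |a 0 * a n| = 1) :
    Irreducible (psiInt n α a) :=
  stmt_13_general α hα1 n r hnr hnα a ha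
end

section
/- For every integer a and every ε ∈ {1, −1}, the polynomial x⁴ + 162·a·x² + 6399·ε is irreducible over ℚ. -/
/-!
A monic biquadratic `X⁴ + p X² + q` over a domain can only factor through a root `r`, which
makes `p² - 4q = (2r² + p)²` a square, or as `(X² + bX + c)(X² - bX + e)` with `b (e - c) = 0`,
which makes `p² - 4q = (c - e)²` or `q = c²` a square. Here `p² - 4q = 18² (81a² - 79ε)`, and
`(9a)² - v² = ±79` with `79` prime forces `18 |a| = 80` or `78`; and `6399 ε` is either negative
or strictly between `79²` and `80²`.
-/

open Polynomial

namespace Polynomial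

theorem Monic.eq_X_sq_add_C_mul_X_add_C {R : Type*} [Semiring R] {f : R[X]} (hm : f.Monic)
    (hnd : f.natDegree = 2) : f = X ^ 2 + C (f.coeff 1) * X + C (f.coeff 0) := by
  have h2 : f.coeff 2 = 1 := hnd ▸ hm.coeff_natDegree
  ext (_ | _ | _ | n)
  · simp
  · simp
  · simp [h2]
  · simp [coeff_eq_zero_of_natDegree_lt (show f.natDegree < n + 3 by omega), coeff_X_pow]

section Biquadratic

variable {R : Type*} [CommRing R] {p q : R}

theorem coeff_eq_of_quadratic_mul_quadratic_eq {b c d e : R}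
    (h : (X ^ 2 + C b * X + C c) * (X ^ 2 + C d * X + C e) = X ^ 4 + C p * X ^ 2 + C q) :
    b + d = 0 ∧ c + e + b * d = p ∧ b * e + c * d = 0 ∧ c * e = q := by
  have hexp : (X ^ 2 + C b * X + C c) * (X ^ 2 + C d * X + C e) =
      X ^ 4 + C (b + d) * X ^ 3 + C (c + e + b * d) * X ^ 2 + C (b * e + c * d) * X + C (c * e) := by
    simp only [C_add, C_mul]; ring
  rw [hexp] at h
  have hcoeff (n : ℕ) := congrArg (coeff · n) h
  simp only [coeff_add, coeff_C_mul, coeff_X_pow, coeff_X, coeff_C] at hcoeff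
  exact ⟨by simpa using hcoeff 3, by simpa using hcoeff 2, by simpa using hcoeff 1,
    by simpa using hcoeff 0⟩

theorem isSquare_discr_of_isRoot {r : R} (h : (X ^ 4 + C p * X ^ 2 + C q).IsRoot r) :
    IsSquare (p ^ 2 - 4 * q) := by
  simp only [IsRoot, eval_add, eval_pow, eval_mul, eval_C, eval_X] at h
  exact ⟨2 * r ^ 2 + p, by linear_combination -4 * h⟩

theorem isSquare_discr_or_isSquare_of_quadratic_mul_quadratic_eq [IsDomain R] {b c d e : R}
    (h : (X ^ 2 + C b * X + C c) * (X ^ 2 + C d * X + C e) = X ^ 4 + C p * X ^ 2 + C q) :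
    IsSquare (p ^ 2 - 4 * q) ∨ IsSquare q := by
  obtain ⟨h3, h2, h1, h0⟩ := coeff_eq_of_quadratic_mul_quadratic_eq h
  rcases mul_eq_zero.mp (show b * (e - c) = 0 by linear_combination h1 - c * h3) with hb | hce
  · subst hb
    exact .inl ⟨c - e, by linear_combination -(c + e + p) * h2 + 4 * h0⟩
  · exact .inr ⟨c, by linear_combination -h0 + c * hce⟩

theorem irreducible_X_pow_four_add_C_mul_X_sq_add_C [IsDomain R]
    (hdiscr : ¬IsSquare (p ^ 2 - 4 * q)) (hq : ¬IsSquare q) :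
    Irreducible (X ^ 4 + C p * X ^ 2 + C q) := by
  have hmonic : (X ^ 4 + C p * X ^ 2 + C q).Monic := by monicity!
  have hdeg : (X ^ 4 + C p * X ^ 2 + C q).natDegree = 4 := by compute_degree!
  rw [hmonic.irreducible_iff_natDegree', hdeg]
  refine ⟨fun h1 => by simp [h1] at hdeg, ?_⟩
  intro f g hf hg hfg hgdeg
  obtain hg1 | hg2 : g.natDegree = 1 ∨ g.natDegree = 2 := by
    simp only [Finset.mem_Ioc] at hgdeg; omega
  · refine hdiscr (isSquare_discr_of_isRoot (r := -g.coeff 0) ?_)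
    rw [← hfg, hg.eq_X_add_C hg1]
    simp
  · have hf2 : f.natDegree = 2 := by
      have := congrArg natDegree hfg
      rw [hf.natDegree_mul hg, hdeg] at this; omega
    rw [hf.eq_X_sq_add_C_mul_X_add_C hf2, hg.eq_X_sq_add_C_mul_X_add_C hg2] at hfg
    exact (isSquare_discr_or_isSquare_of_quadratic_mul_quadratic_eq hfg).elim hdiscr hq

end Biquadratic

end Polynomial

theorem Int.two_mul_natAbs_eq_of_sq_sub_sq_eq_prime {p : ℕ} (hp : p.Prime) {x y : ℤ}
    (h : x ^ 2 - y ^ 2 = p) : 2 * x.natAbs = p + 1 ∧ 2 * y.natAbs = p - 1 := by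
  have hfac : (x - y) * (x + y) = p := by linear_combination h
  have hirr := (Nat.prime_iff_prime_int.mp hp).irreducible
  have hp2 := hp.two_le
  rcases hirr.isUnit_or_isUnit hfac.symm with hu | hu <;>
    rcases Int.isUnit_iff.mp hu with h1 | h1 <;> rw [h1] at hfac <;> omega

theorem not_isSquare_81_mul_sq_sub_79_mul (a ε : ℤ) (hε : ε = 1 ∨ ε = -1) :
    ¬IsSquare (81 * a ^ 2 - 79 * ε) := by
  rintro ⟨v, hv⟩
  rcases hε with rfl | rfl
  · have := (Int.two_mul_natAbs_eq_of_sq_sub_sq_eq_prime (p := 79) (by norm_num) (x := 9 * a)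
      (y := v) (by push_cast; linear_combination hv)).1
    omega
  · have := (Int.two_mul_natAbs_eq_of_sq_sub_sq_eq_prime (p := 79) (by norm_num) (x := v)
      (y := 9 * a) (by push_cast; linear_combination -hv)).2
    omega

theorem stmt_16 (a : ℤ) (ε : ℤ) (hε : ε = 1 ∨ ε = -1) :
    Irreducible ((Polynomial.X ^ 4 + Polynomial.C ((162 * a : ℤ) : ℚ) * Polynomial.X ^ 2 +
      Polynomial.C ((6399 * ε : ℤ) : ℚ)) : Polynomial ℚ) := by
  refine irreducible_X_pow_four_add_C_mul_X_sq_add_C ?_ ?_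
  · have hdiscr : ((162 * a : ℤ) : ℚ) ^ 2 - 4 * ((6399 * ε : ℤ) : ℚ) =
        18 ^ 2 * ((81 * a ^ 2 - 79 * ε : ℤ) : ℚ) := by push_cast; ring
    rw [hdiscr]
    intro h
    refine not_isSquare_81_mul_sq_sub_79_mul a ε hε (Rat.isSquare_intCast_iff.mp ?_)
    simpa using h.div (IsSquare.sq 18)
  · rcases hε with rfl | rfl <;> norm_num
end
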